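/- arXiv:1911.05981 — 6 statements merged into one kernel-verified Lean document; each statement's English description precedes it below -/
import Mathlib

section
/- Let H_{A0}, H_A, H_B, H_{B0} be finite-dimensional Hilbert spaces and suppose ρ^{AB} is a density operator on H_A ⊗ H_B that is separable. Then for any positive operators M^{A0A} on H_{A0} ⊗ H_A and M^{BB0} on H_B ⊗ H_{B0}, the effective operator M̃^{A0B0} = Tr_{AB}[(I^{A0} ⊗ ρ^{AB} ⊗ I^{B0})(M^{A0A} ⊗ M^{BB0})] is separable on H_{A0} ⊗ H_{B0}. -/
/-! The effective map `ρ ↦ Tr_{AB}[(I ⊗ ρ ⊗ I)(M^{A0A} ⊗ M^{BB0})]` is additive, and on a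
product `ρ = f ⊗ g` it factorises as `Tr_A[(I ⊗ f) M^{A0A}] ⊗ Tr_B[(g ⊗ I) M^{BB0}]`.
Each factor is positive: writing `f = C†C` and moving `I ⊗ C†` around the partial trace over
the factor it acts on, `Tr_A[(I ⊗ f) M] = Tr_A[(I ⊗ C) M (I ⊗ C)†]`,
a partial trace of a positive operator. -/

open Matrix BigOperators
open scoped Kronecker ComplexOrder

noncomputable section

/-- A positive operator on a bipartite space is separable if it is a finite sum of
tensor (Kronecker) products of positive semidefinite local operators. -/
def IsSepOp {m n : Type*} [Fintype m] [Fintype n]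
    (σ : Matrix (m × n) (m × n) ℂ) : Prop :=
  ∃ (k : ℕ) (f : Fin k → Matrix m m ℂ) (g : Fin k → Matrix n n ℂ),
    (∀ i, (f i).PosSemidef) ∧ (∀ i, (g i).PosSemidef) ∧ σ = ∑ i, f i ⊗ₖ g i

variable {A0 A B B0 : Type*} [Fintype A0] [Fintype A] [Fintype B] [Fintype B0]
  [DecidableEq A0] [DecidableEq A] [DecidableEq B] [DecidableEq B0]

/-- `I^{A0} ⊗ ρ^{AB} ⊗ I^{B0}` as an operator on `H_{A0} ⊗ H_A ⊗ H_B ⊗ H_{B0}`. -/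
def midEmbed (ρ : Matrix (A × B) (A × B) ℂ) :
    Matrix ((A0 × A) × (B × B0)) ((A0 × A) × (B × B0)) ℂ :=
  Matrix.of fun p q =>
    (if p.1.1 = q.1.1 then 1 else 0) * ρ (p.1.2, p.2.1) (q.1.2, q.2.1) *
      (if p.2.2 = q.2.2 then 1 else 0)

/-- Partial trace over the middle factors `H_A ⊗ H_B`. -/
def ptraceMid (M : Matrix ((A0 × A) × (B × B0)) ((A0 × A) × (B × B0)) ℂ) :
    Matrix (A0 × B0) (A0 × B0) ℂ :=
  Matrix.of fun p q => ∑ a : A, ∑ b : B, M ((p.1, a), (b, p.2)) ((q.1, a), (b, q.2))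

/-- Effective operator `Tr_{AB}[(I ⊗ ρ^{AB} ⊗ I)(M^{A0A} ⊗ M^{BB0})]`. -/
def effOp (ρ : Matrix (A × B) (A × B) ℂ)
    (M1 : Matrix (A0 × A) (A0 × A) ℂ) (M2 : Matrix (B × B0) (B × B0) ℂ) :
    Matrix (A0 × B0) (A0 × B0) ℂ :=
  ptraceMid (midEmbed ρ * (M1 ⊗ₖ M2))

/-- Tensor product of vectors. -/
def tens {m n : Type*} (u : m → ℂ) (v : n → ℂ) : m × n → ℂ := fun p => u p.1 * v p.2

/-- Rank-one projector `|v⟩⟨v|` associated to a vector. -/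
def vecProj {m : Type*} (v : m → ℂ) : Matrix m m ℂ := Matrix.of fun p q => v p * star (v q)

namespace Matrix

variable {m n a R : Type*} [Fintype a]

def partialTraceRight [AddCommMonoid R] (X : Matrix (m × a) (n × a) R) : Matrix m n R :=
  of fun p q => ∑ x, X (p, x) (q, x)

def partialTraceLeft [AddCommMonoid R] (X : Matrix (a × m) (a × n) R) : Matrix m n R :=
  of fun p q => ∑ x, X (x, p) (x, q)

theorem PosSemidef.partialTraceRight [Fintype m] [CommRing R] [PartialOrder R] [StarRing R]
    [IsOrderedAddMonoid R] {X : Matrix (m × a) (m × a) R} (hX : X.PosSemidef) :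
    X.partialTraceRight.PosSemidef := by
  have : X.partialTraceRight = ∑ x, X.submatrix (·, x) (·, x) := by
    ext p q; simp [Matrix.partialTraceRight, Matrix.sum_apply]
  rw [this]
  exact posSemidef_sum _ fun x _ => hX.submatrix _

variable [Fintype m] [DecidableEq m]

theorem one_kronecker_mul_apply [CommSemiring R] (D : Matrix a a R) (X : Matrix (m × a) (n × a) R)
    (p : m × a) (q : n × a) :
    (((1 : Matrix m m R) ⊗ₖ D) * X) p q = ∑ y, D p.2 y * X (p.1, y) q := by
  simp [Matrix.mul_apply, Fintype.sum_prod_type, one_apply, ite_mul]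

theorem kronecker_one_mul_apply [CommSemiring R] (D : Matrix a a R) (X : Matrix (a × m) (a × n) R)
    (p : a × m) (q : a × n) :
    ((D ⊗ₖ (1 : Matrix m m R)) * X) p q = ∑ y, D p.1 y * X (y, p.2) q := by
  simp [Matrix.mul_apply, Fintype.sum_prod_type, one_apply, ite_mul]

theorem mul_one_kronecker_apply [CommSemiring R] (D : Matrix a a R) (X : Matrix (n × a) (m × a) R)
    (p : n × a) (q : m × a) :
    (X * ((1 : Matrix m m R) ⊗ₖ D)) p q = ∑ y, X p (q.1, y) * D y q.2 := by
  simp [Matrix.mul_apply, Fintype.sum_prod_type, one_apply, mul_ite]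

theorem partialTraceRight_one_kronecker_mul_comm [CommSemiring R] (D : Matrix a a R)
    (X : Matrix (m × a) (m × a) R) :
    (((1 : Matrix m m R) ⊗ₖ D) * X).partialTraceRight =
      (X * ((1 : Matrix m m R) ⊗ₖ D)).partialTraceRight := by
  ext p q
  simp only [partialTraceRight, of_apply, one_kronecker_mul_apply, mul_one_kronecker_apply]
  rw [Finset.sum_comm]
  simp only [mul_comm]

section RCLike

variable {𝕜 : Type*} [RCLike 𝕜]

theorem PosSemidef.exists_eq_conjTranspose_mul_self {f : Matrix a a 𝕜} (hf : f.PosSemidef) :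
    ∃ C : Matrix a a 𝕜, f = Cᴴ * C := by
  classical
  open scoped MatrixOrder in
  exact CStarAlgebra.nonneg_iff_eq_star_mul_self.mp hf.nonneg

theorem PosSemidef.partialTraceRight_one_kronecker_mul {f : Matrix a a 𝕜} (hf : f.PosSemidef)
    {M : Matrix (m × a) (m × a) 𝕜} (hM : M.PosSemidef) :
    (((1 : Matrix m m 𝕜) ⊗ₖ f) * M).partialTraceRight.PosSemidef := by
  obtain ⟨C, rfl⟩ := hf.exists_eq_conjTranspose_mul_self
  have hsplit :
      ((1 : Matrix m m 𝕜) ⊗ₖ (Cᴴ * C)) * M = (1 ⊗ₖ Cᴴ) * ((1 ⊗ₖ C) * M) := by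
    rw [← Matrix.mul_assoc, ← mul_kronecker_mul, Matrix.one_mul]
  rw [hsplit, partialTraceRight_one_kronecker_mul_comm, ← conjTranspose_one,
    ← conjTranspose_kronecker, conjTranspose_one]
  exact (hM.mul_mul_conjTranspose_same _).partialTraceRight

theorem partialTraceLeft_kronecker_one_mul (g : Matrix a a 𝕜)
    (M : Matrix (a × m) (a × m) 𝕜) :
    ((g ⊗ₖ (1 : Matrix m m 𝕜)) * M).partialTraceLeft =
      (((1 : Matrix m m 𝕜) ⊗ₖ g) * M.submatrix Prod.swap Prod.swap).partialTraceRight := by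
  ext p q
  simp [partialTraceLeft, partialTraceRight, kronecker_one_mul_apply, one_kronecker_mul_apply]

theorem PosSemidef.partialTraceLeft_kronecker_one_mul {g : Matrix a a 𝕜} (hg : g.PosSemidef)
    {M : Matrix (a × m) (a × m) 𝕜} (hM : M.PosSemidef) :
    ((g ⊗ₖ (1 : Matrix m m 𝕜)) * M).partialTraceLeft.PosSemidef := by
  rw [Matrix.partialTraceLeft_kronecker_one_mul]
  exact hg.partialTraceRight_one_kronecker_mul (hM.submatrix _)

end RCLike

end Matrix

section

omit [DecidableEq A] [DecidableEq B]

theorem midEmbed_mul_kronecker_apply (ρ : Matrix (A × B) (A × B) ℂ)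
    (M1 : Matrix (A0 × A) (A0 × A) ℂ) (M2 : Matrix (B × B0) (B × B0) ℂ)
    (p q : A0 × B0) (a : A) (b : B) :
    (midEmbed (A0 := A0) (B0 := B0) ρ * (M1 ⊗ₖ M2)) ((p.1, a), (b, p.2)) ((q.1, a), (b, q.2)) =
      ∑ a' : A, ∑ b' : B,
        ρ (a, b) (a', b') * (M1 (p.1, a') (q.1, a) * M2 (b', p.2) (b, q.2)) := by
  simp only [midEmbed, Matrix.mul_apply, Matrix.of_apply, kroneckerMap_apply,
    Fintype.sum_prod_type, ite_mul, one_mul, zero_mul, mul_ite, mul_one, mul_zero,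
    Finset.sum_ite_irrel, Finset.sum_const_zero, Finset.sum_ite_eq,
    Finset.mem_univ, if_true]

theorem effOp_kronecker (f : Matrix A A ℂ) (g : Matrix B B ℂ)
    (M1 : Matrix (A0 × A) (A0 × A) ℂ) (M2 : Matrix (B × B0) (B × B0) ℂ) :
    effOp (f ⊗ₖ g) M1 M2 =
      (((1 : Matrix A0 A0 ℂ) ⊗ₖ f) * M1).partialTraceRight ⊗ₖ
        ((g ⊗ₖ (1 : Matrix B0 B0 ℂ)) * M2).partialTraceLeft := by
  ext p q
  simp only [effOp, ptraceMid, of_apply, midEmbed_mul_kronecker_apply, kroneckerMap_apply,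
    partialTraceRight, partialTraceLeft, one_kronecker_mul_apply, kronecker_one_mul_apply,
    Finset.sum_mul_sum]
  exact Fintype.sum_congr _ _ fun a => Fintype.sum_congr _ _ fun b => Fintype.sum_congr _ _
    fun a' => Fintype.sum_congr _ _ fun b' => by ring

theorem effOp_sum {ι : Type*} (s : Finset ι) (ρ : ι → Matrix (A × B) (A × B) ℂ)
    (M1 : Matrix (A0 × A) (A0 × A) ℂ) (M2 : Matrix (B × B0) (B × B0) ℂ) :
    effOp (∑ i ∈ s, ρ i) M1 M2 = ∑ i ∈ s, effOp (ρ i) M1 M2 := by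
  have hadd (ρ σ : Matrix (A × B) (A × B) ℂ) :
      effOp (ρ + σ) M1 M2 = effOp ρ M1 M2 + effOp σ M1 M2 := by
    have : midEmbed (A0 := A0) (B0 := B0) (ρ + σ) = midEmbed ρ + midEmbed σ := by
      ext; simp only [midEmbed, of_apply, Matrix.add_apply]; ring
    ext; simp [effOp, ptraceMid, this, Matrix.add_mul, Finset.sum_add_distrib]
  exact map_sum (AddMonoidHom.mk' (effOp · M1 M2) hadd) ρ s

end

theorem stmt1_general
    (ρ : Matrix (A × B) (A × B) ℂ)
    (hρsep : IsSepOp ρ)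
    (M1 : Matrix (A0 × A) (A0 × A) ℂ) (hM1 : M1.PosSemidef)
    (M2 : Matrix (B × B0) (B × B0) ℂ) (hM2 : M2.PosSemidef) :
    IsSepOp (effOp ρ M1 M2) := by
  obtain ⟨k, f, g, hf, hg, rfl⟩ := hρsep
  refine ⟨k, fun i => (((1 : Matrix A0 A0 ℂ) ⊗ₖ f i) * M1).partialTraceRight,
    fun i => ((g i ⊗ₖ (1 : Matrix B0 B0 ℂ)) * M2).partialTraceLeft,
    fun i => (hf i).partialTraceRight_one_kronecker_mul hM1,
    fun i => (hg i).partialTraceLeft_kronecker_one_mul hM2, ?_⟩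
  rw [effOp_sum]
  exact Finset.sum_congr rfl fun i _ => effOp_kronecker (f i) (g i) M1 M2

/-- if `ρ^{AB}` is separable, the effective operator is separable. -/
theorem stmt1
    (ρ : Matrix (A × B) (A × B) ℂ) (hρ : ρ.PosSemidef) (hρtr : ρ.trace = 1)
    (hρsep : IsSepOp ρ)
    (M1 : Matrix (A0 × A) (A0 × A) ℂ) (hM1 : M1.PosSemidef)
    (M2 : Matrix (B × B0) (B × B0) ℂ) (hM2 : M2.PosSemidef) :
    IsSepOp (effOp ρ M1 M2) :=
  stmt1_general ρ hρsep M1 hM1 M2 hM2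
end
end

section
/- Lemma 3: Let H_A, H_B be Hilbert spaces, |Ψ⟩ ∈ H_A ⊗ H_B a unit vector, and |φ^A⟩, |φ̄^A⟩ ∈ H_A, |φ^B⟩, |φ̄^B⟩ ∈ H_B unit vectors (not necessarily orthogonal within each party). Assume ⟨Ψ|(|φ^A⟩⊗|φ̄^B⟩) = 0 and ⟨Ψ|(|φ̄^A⟩⊗|φ^B⟩) = 0. Then |⟨Ψ|(|φ^A⟩⊗|φ^B⟩)|² + |⟨Ψ|(|φ̄^A⟩⊗|φ̄^B⟩)|² ≤ 1. -/
/-!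
Write `φ̄^A = s φ^A + r` with `r ⟂ φ^A` and `‖r‖ ≤ 1`. Since `Ψ ⟂ φ^A ⊗ φ̄^B`, the overlap
`⟨Ψ|φ̄^A φ̄^B⟩` equals `⟨Ψ|r φ̄^B⟩`. The vectors `φ^A ⊗ φ^B` and `r ⊗ φ̄^B` are orthogonal, the
first a unit vector and the second of norm at most one, so Bessel's inequality bounds the sum of
the two squared overlaps by `‖Ψ‖² = 1`.
-/

open Matrix BigOperators
open scoped Kronecker ComplexOrder

noncomputable section

variable {A0 A B B0 : Type*} [Fintype A0] [Fintype A] [Fintype B] [Fintype B0]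
  [DecidableEq A0] [DecidableEq A] [DecidableEq B] [DecidableEq B0]

open scoped InnerProductSpace

section Orthogonalization

variable {𝕜 E : Type*} [RCLike 𝕜] [NormedAddCommGroup E] [InnerProductSpace 𝕜 E]

lemma inner_sub_inner_smul_self_eq_zero {u : E} (hu : ‖u‖ = 1) (v : E) :
    ⟪u, v - ⟪u, v⟫_𝕜 • u⟫_𝕜 = 0 := by
  rw [inner_sub_right, inner_smul_right, inner_self_eq_norm_sq_to_K, hu]
  simp

lemma norm_sq_eq_norm_inner_sq_add_norm_sub_sq {u : E} (hu : ‖u‖ = 1) (v : E) :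
    ‖v‖ ^ 2 = ‖⟪u, v⟫_𝕜‖ ^ 2 + ‖v - ⟪u, v⟫_𝕜 • u‖ ^ 2 := by
  have h := norm_add_sq_eq_norm_sq_add_norm_sq_of_inner_eq_zero (⟪u, v⟫_𝕜 • u)
    (v - ⟪u, v⟫_𝕜 • u) (by rw [inner_smul_left, inner_sub_inner_smul_self_eq_zero hu, mul_zero])
  simpa only [add_sub_cancel, norm_smul, hu, mul_one, ← sq] using h

lemma norm_sub_inner_smul_self_le {u : E} (hu : ‖u‖ = 1) (v : E) :
    ‖v - ⟪u, v⟫_𝕜 • u‖ ≤ ‖v‖ := by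
  refine (pow_le_pow_iff_left₀ (norm_nonneg _) (norm_nonneg _) two_ne_zero).mp ?_
  rw [norm_sq_eq_norm_inner_sq_add_norm_sub_sq (𝕜 := 𝕜) hu v]
  exact le_add_of_nonneg_left (sq_nonneg _)

lemma norm_inner_sq_add_norm_inner_sq_le {u w : E} (hu : ‖u‖ = 1) (hw : ‖w‖ ≤ 1)
    (huw : ⟪u, w⟫_𝕜 = 0) (Ψ : E) :
    ‖⟪Ψ, u⟫_𝕜‖ ^ 2 + ‖⟪Ψ, w⟫_𝕜‖ ^ 2 ≤ ‖Ψ‖ ^ 2 := by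
  set Ψ' := Ψ - ⟪u, Ψ⟫_𝕜 • u
  have hΨw : ⟪Ψ, w⟫_𝕜 = ⟪Ψ', w⟫_𝕜 := by
    simp [Ψ', inner_sub_left, inner_smul_left, huw]
  have hΨw_le : ‖⟪Ψ, w⟫_𝕜‖ ≤ ‖Ψ'‖ := by
    rw [hΨw]
    exact (norm_inner_le_norm (𝕜 := 𝕜) Ψ' w).trans (mul_le_of_le_one_right (norm_nonneg _) hw)
  rw [norm_sq_eq_norm_inner_sq_add_norm_sub_sq (𝕜 := 𝕜) hu Ψ, norm_inner_symm]
  gcongr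

end Orthogonalization

lemma tens_add_left {m n : Type*} (u u' : m → ℂ) (v : n → ℂ) :
    tens (u + u') v = tens u v + tens u' v := by
  ext p; simp [tens, add_mul]

lemma tens_smul_left {m n : Type*} (c : ℂ) (u : m → ℂ) (v : n → ℂ) :
    tens (c • u) v = c • tens u v := by
  ext p; simp [tens, mul_assoc]

section Euclidean

variable {ι ιA ιB : Type*} [Fintype ι] [Fintype ιA] [Fintype ιB]

lemma star_dotProduct_eq_inner (x y : ι → ℂ) :
    star x ⬝ᵥ y = ⟪WithLp.toLp 2 x, WithLp.toLp 2 y⟫_ℂ := by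
  rw [EuclideanSpace.inner_toLp_toLp, dotProduct_comm]

lemma norm_toLp_eq_one {x : ι → ℂ} (hx : star x ⬝ᵥ x = 1) : ‖WithLp.toLp 2 x‖ = 1 := by
  rw [star_dotProduct_eq_inner, inner_self_eq_norm_sq_to_K, ← RCLike.ofReal_pow,
    ← RCLike.ofReal_one, RCLike.ofReal_inj] at hx
  exact (pow_eq_one_iff_of_nonneg (norm_nonneg _) two_ne_zero).mp hx

lemma star_tens_dotProduct_tens (u u' : ιA → ℂ) (v v' : ιB → ℂ) :
    star (tens u v) ⬝ᵥ tens u' v' = (star u ⬝ᵥ u') * (star v ⬝ᵥ v') := by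
  simp only [dotProduct, Finset.sum_mul_sum, ← Finset.univ_product_univ, Finset.sum_product]
  simp [tens, mul_mul_mul_comm]

lemma norm_toLp_tens (u : ιA → ℂ) (v : ιB → ℂ) :
    ‖WithLp.toLp 2 (tens u v)‖ = ‖WithLp.toLp 2 u‖ * ‖WithLp.toLp 2 v‖ := by
  have h := star_tens_dotProduct_tens u u v v
  simp only [star_dotProduct_eq_inner, inner_self_eq_norm_sq_to_K, ← mul_pow] at h
  exact (pow_left_inj₀ (norm_nonneg _) (by positivity) two_ne_zero).mp (mod_cast h)

end Euclidean

theorem stmt7_general {ιA ιB : Type*} [Fintype ιA] [Fintype ιB]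
    (Ψ : ιA × ιB → ℂ) (hΨ : star Ψ ⬝ᵥ Ψ = 1)
    (φA φA' : ιA → ℂ) (φB φB' : ιB → ℂ)
    (hφA : star φA ⬝ᵥ φA = 1) (hφA' : star φA' ⬝ᵥ φA' = 1)
    (hφB : star φB ⬝ᵥ φB = 1) (hφB' : star φB' ⬝ᵥ φB' = 1)
    (h1 : star Ψ ⬝ᵥ tens φA φB' = 0) :
    ‖star Ψ ⬝ᵥ tens φA φB‖ ^ 2 + ‖star Ψ ⬝ᵥ tens φA' φB'‖ ^ 2 ≤ 1 := by
  set s := star φA ⬝ᵥ φA'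
  set r := φA' - s • φA
  have ha := norm_toLp_eq_one hφA
  have hr_toLp : WithLp.toLp 2 r =
      WithLp.toLp 2 φA' - ⟪WithLp.toLp 2 φA, WithLp.toLp 2 φA'⟫_ℂ • WithLp.toLp 2 φA := by
    rw [← star_dotProduct_eq_inner]; rfl
  have hr_orth : star φA ⬝ᵥ r = 0 := by
    rw [star_dotProduct_eq_inner, hr_toLp, inner_sub_inner_smul_self_eq_zero ha]
  have hr_le : ‖WithLp.toLp 2 r‖ ≤ 1 :=
    hr_toLp ▸ (norm_sub_inner_smul_self_le ha _).trans_eq (norm_toLp_eq_one hφA')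
  have hΨ_eq : star Ψ ⬝ᵥ tens φA' φB' = star Ψ ⬝ᵥ tens r φB' := by
    rw [show φA' = s • φA + r from (add_sub_cancel _ _).symm, tens_add_left, tens_smul_left,
      dotProduct_add, dotProduct_smul, h1, smul_zero, zero_add]
  have hu : ‖WithLp.toLp 2 (tens φA φB)‖ = 1 := by
    rw [norm_toLp_tens, ha, norm_toLp_eq_one hφB, one_mul]
  have hw : ‖WithLp.toLp 2 (tens r φB')‖ ≤ 1 := by
    rwa [norm_toLp_tens, norm_toLp_eq_one hφB', mul_one]
  have huw : ⟪WithLp.toLp 2 (tens φA φB), WithLp.toLp 2 (tens r φB')⟫_ℂ = 0 := by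
    rw [← star_dotProduct_eq_inner, star_tens_dotProduct_tens, hr_orth, zero_mul]
  have key := norm_inner_sq_add_norm_inner_sq_le hu hw huw (WithLp.toLp 2 Ψ)
  simpa only [← star_dotProduct_eq_inner, norm_toLp_eq_one hΨ, one_pow, hΨ_eq] using key

/-- Lemma 3, inequality: under the two cross orthogonality conditions,
`|⟨Ψ|φ^A φ^B⟩|² + |⟨Ψ|φ̄^A φ̄^B⟩|² ≤ 1`. -/
theorem stmt7 {ιA ιB : Type*} [Fintype ιA] [Fintype ιB]
    (Ψ : ιA × ιB → ℂ) (hΨ : star Ψ ⬝ᵥ Ψ = 1)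
    (φA φA' : ιA → ℂ) (φB φB' : ιB → ℂ)
    (hφA : star φA ⬝ᵥ φA = 1) (hφA' : star φA' ⬝ᵥ φA' = 1)
    (hφB : star φB ⬝ᵥ φB = 1) (hφB' : star φB' ⬝ᵥ φB' = 1)
    (h1 : star Ψ ⬝ᵥ tens φA φB' = 0) (h2 : star Ψ ⬝ᵥ tens φA' φB = 0) :
    ‖star Ψ ⬝ᵥ tens φA φB‖ ^ 2 + ‖star Ψ ⬝ᵥ tens φA' φB'‖ ^ 2 ≤ 1 :=
  stmt7_general Ψ hΨ φA φA' φB φB' hφA hφA' hφB hφB' h1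
end
end

section
/- Lemma 3 equality case: Under the hypotheses of Lemma 3 (|Ψ⟩ a unit vector in H_A ⊗ H_B, unit vectors |φ^A⟩, |φ̄^A⟩ ∈ H_A and |φ^B⟩, |φ̄^B⟩ ∈ H_B with ⟨Ψ|φ^A φ̄^B⟩ = ⟨Ψ|φ̄^A φ^B⟩ = 0, and assuming |φ^A⟩ ≠ |φ̄^A⟩ up to phase and |φ^B⟩ ≠ |φ̄^B⟩ up to phase and ⟨Ψ|φ^A φ^B⟩ ≠ 0), if |⟨Ψ|φ^A φ^B⟩|² + |⟨Ψ|φ̄^A φ̄^B⟩|² = 1 then ⟨φ^A|φ̄^A⟩ = 0 and ⟨φ^B|φ̄^B⟩ = 0, and |Ψ⟩ lies in the span of {|φ^A φ^B⟩, |φ^A φ̄^B⟩, |φ̄^A φ^B⟩, |φ̄^A φ̄^B⟩}. -/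
open Matrix BigOperators
open scoped Kronecker ComplexOrder

noncomputable section

variable {A0 A B B0 : Type*} [Fintype A0] [Fintype A] [Fintype B] [Fintype B0]
  [DecidableEq A0] [DecidableEq A] [DecidableEq B] [DecidableEq B0]

/-! Write `φA' = a φA + sA χA` and `φB' = b φB + sB χB` with unit vectors `χA ⊥ φA`,
`χB ⊥ φB`, and let `x, p, q, z` be the overlaps of `Ψ` with `φA φB, φA χB, χA φB, χA χB`,
so that `|x|² + |p|² + |q|² + |z|² ≤ 1` by Bessel's inequality. The two vanishing overlaps
read `b x + sB p = 0` and `a x + sA q = 0`; they turn `⟨Ψ|φA' φB'⟩` into `sB (a p + sA z)`,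
whose modulus squared is at most `|p|² + |z|²` by Cauchy–Schwarz. So the equality
`|x|² + |⟨Ψ|φA' φB'⟩|² = 1` forces `q = 0`, hence `a x = 0` and `a = 0`; symmetrically
`b = 0`. The four product vectors are then orthonormal and saturate Bessel's inequality,
so `Ψ` lies in their span. -/

section Hermitian

variable {ι κ : Type*}

lemma tens_add_left_s8 (u v : ι → ℂ) (w : κ → ℂ) : tens (u + v) w = tens u w + tens v w := by
  funext p; simp [tens, add_mul]

lemma tens_add_right (u : ι → ℂ) (v w : κ → ℂ) : tens u (v + w) = tens u v + tens u w := by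
  funext p; simp [tens, mul_add]

lemma tens_smul_left_s8 (c : ℂ) (u : ι → ℂ) (w : κ → ℂ) : tens (c • u) w = c • tens u w := by
  funext p; simp [tens, mul_assoc]

lemma tens_smul_right (c : ℂ) (u : ι → ℂ) (w : κ → ℂ) : tens u (c • w) = c • tens u w := by
  funext p; simp [tens, mul_left_comm]

lemma star_dotProduct_tens_add_smul_left [Fintype ι] [Fintype κ] (Ψ : ι × κ → ℂ)
    (u χ : ι → ℂ) (v : κ → ℂ) (a s : ℂ) :
    star Ψ ⬝ᵥ tens (a • u + s • χ) v = a * star Ψ ⬝ᵥ tens u v + s * star Ψ ⬝ᵥ tens χ v := by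
  rw [tens_add_left_s8, tens_smul_left_s8, tens_smul_left_s8, dotProduct_add, dotProduct_smul,
    dotProduct_smul, smul_eq_mul, smul_eq_mul]

lemma star_dotProduct_tens_add_smul_right [Fintype ι] [Fintype κ] (Ψ : ι × κ → ℂ)
    (u : ι → ℂ) (v ω : κ → ℂ) (b t : ℂ) :
    star Ψ ⬝ᵥ tens u (b • v + t • ω) = b * star Ψ ⬝ᵥ tens u v + t * star Ψ ⬝ᵥ tens u ω := by
  rw [tens_add_right, tens_smul_right, tens_smul_right, dotProduct_add, dotProduct_smul,
    dotProduct_smul, smul_eq_mul, smul_eq_mul]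

lemma star_tens_dotProduct_tens_s8 [Fintype ι] [Fintype κ] (u w : ι → ℂ) (v z : κ → ℂ) :
    star (tens u v) ⬝ᵥ tens w z = (star u ⬝ᵥ w) * (star v ⬝ᵥ z) := by
  simp only [dotProduct, Pi.star_apply, tens, star_mul', Fintype.sum_prod_type,
    Finset.sum_mul_sum]
  exact Finset.sum_congr rfl fun i _ => Finset.sum_congr rfl fun j _ => by ring

variable [Fintype ι]

lemma star_star_dotProduct (u v : ι → ℂ) : star (star u ⬝ᵥ v) = star v ⬝ᵥ u := by
  rw [← star_dotProduct_star, star_star]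

lemma star_mul_self_eq_norm_sq (z : ℂ) : star z * z = (‖z‖ ^ 2 : ℝ) := by
  rw [Complex.star_def, Complex.conj_mul', Complex.ofReal_pow]

lemma exists_unit_smul_eq {w : ι → ℂ} (hw : w ≠ 0) :
    ∃ (χ : ι → ℂ) (s : ℂ), star χ ⬝ᵥ χ = 1 ∧ w = s • χ := by
  have hpos := dotProduct_star_self_pos_iff.mpr hw
  have hre : star w ⬝ᵥ w = ((star w ⬝ᵥ w).re : ℂ) := Complex.eq_re_of_ofReal_le hpos.le
  set r := Real.sqrt (star w ⬝ᵥ w).re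
  have hr : (r : ℂ) ≠ 0 := by
    exact_mod_cast (Real.sqrt_pos.mpr (Complex.pos_iff.mp hpos).1).ne'
  have hr2 : (r : ℂ) ^ 2 = star w ⬝ᵥ w := by
    rw [hre, ← Complex.ofReal_pow, Real.sq_sqrt (Complex.pos_iff.mp hpos).1.le]
  refine ⟨(r : ℂ)⁻¹ • w, r, ?_, by rw [smul_smul, mul_inv_cancel₀ hr, one_smul]⟩
  rw [star_smul, smul_dotProduct, dotProduct_smul, ← hr2, smul_eq_mul, smul_eq_mul, star_inv₀,
    Complex.star_def, Complex.conj_ofReal]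
  field_simp

lemma exists_orthogonal_decomposition {u u' : ι → ℂ} (hu : star u ⬝ᵥ u = 1)
    (hu' : star u' ⬝ᵥ u' = 1) (h : ¬ ∃ c : ℂ, ‖c‖ = 1 ∧ u' = c • u) :
    ∃ (χ : ι → ℂ) (s : ℂ), star χ ⬝ᵥ χ = 1 ∧ star u ⬝ᵥ χ = 0 ∧
      u' = (star u ⬝ᵥ u') • u + s • χ ∧ ‖star u ⬝ᵥ u'‖ ^ 2 + ‖s‖ ^ 2 = 1 := by
  set a := star u ⬝ᵥ u'
  have hw : u' - a • u ≠ 0 := by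
    intro hw
    rw [sub_eq_zero] at hw
    refine h ⟨a, ?_, hw⟩
    have ha : ((‖a‖ ^ 2 : ℝ) : ℂ) = 1 := by
      rw [← star_mul_self_eq_norm_sq, ← hu', hw, star_smul, smul_dotProduct, dotProduct_smul, hu]
      simp
    have ha' : ‖a‖ ^ 2 = 1 := by exact_mod_cast ha
    nlinarith [norm_nonneg a]
  obtain ⟨χ, s, hχ, hws⟩ := exists_unit_smul_eq hw
  have hs : s ≠ 0 := by
    rintro rfl
    exact hw (by rw [hws, zero_smul])
  have huχ : star u ⬝ᵥ χ = 0 := by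
    have : star u ⬝ᵥ (u' - a • u) = 0 := by simp [dotProduct_sub, hu, a]
    rwa [hws, dotProduct_smul, smul_eq_mul, mul_eq_zero, or_iff_right hs] at this
  have hχu : star χ ⬝ᵥ u = 0 := by rw [← star_star_dotProduct, huχ, star_zero]
  have hdec : u' = a • u + s • χ := by rw [← hws, add_sub_cancel]
  refine ⟨χ, s, hχ, huχ, hdec, ?_⟩
  have h1 : star a * a + star s * s = 1 := by
    rw [← hu', hdec]
    simp [dotProduct_add, add_dotProduct, hu, hχ, huχ, hχu]
    ring
  rw [star_mul_self_eq_norm_sq, star_mul_self_eq_norm_sq] at h1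
  exact_mod_cast h1

def IsOrthonormal [DecidableEq κ] (g : κ → ι → ℂ) : Prop :=
  ∀ i j, star (g i) ⬝ᵥ g j = if i = j then 1 else 0

lemma isOrthonormal_pair {u u' : ι → ℂ} (hu : star u ⬝ᵥ u = 1) (hu' : star u' ⬝ᵥ u' = 1)
    (huu' : star u ⬝ᵥ u' = 0) : IsOrthonormal ![u, u'] := by
  have hu'u : star u' ⬝ᵥ u = 0 := by rw [← star_star_dotProduct, huu', star_zero]
  intro i j
  fin_cases i <;> fin_cases j <;> simp [hu, hu', huu', hu'u]

lemma IsOrthonormal.tens {ι' κ' : Type*} [Fintype ι'] [DecidableEq κ] [DecidableEq κ']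
    {g : κ → ι → ℂ} {h : κ' → ι' → ℂ}
    (hg : IsOrthonormal g) (hh : IsOrthonormal h) :
    IsOrthonormal fun k : κ × κ' => tens (g k.1) (h k.2) := by
  rintro ⟨i, i'⟩ ⟨j, j'⟩
  rw [star_tens_dotProduct_tens_s8, hg, hh]
  by_cases hij : i = j <;> by_cases hij' : i' = j' <;> simp [hij, hij']

variable [Fintype κ]

lemma star_dotProduct_self_sub_sum [DecidableEq κ] {g : κ → ι → ℂ} (hg : IsOrthonormal g)
    (Ψ : ι → ℂ) :
    star (Ψ - ∑ k, (star (g k) ⬝ᵥ Ψ) • g k) ⬝ᵥ (Ψ - ∑ k, (star (g k) ⬝ᵥ Ψ) • g k) =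
      star Ψ ⬝ᵥ Ψ - ((∑ k, ‖star Ψ ⬝ᵥ g k‖ ^ 2 : ℝ) : ℂ) := by
  simp only [star_sub, star_sum, star_smul, sub_dotProduct, dotProduct_sub, sum_dotProduct,
    dotProduct_sum, smul_dotProduct, dotProduct_smul, smul_eq_mul, hg _ _, mul_ite, mul_one,
    mul_zero, Finset.sum_ite_eq', Finset.mem_univ, if_true, ← star_star_dotProduct (g _) Ψ,
    sub_self, Finset.sum_const_zero, sub_zero, norm_star]
  simp only [Complex.ofReal_sum, ← star_mul_self_eq_norm_sq]

lemma sum_norm_sq_le_one [DecidableEq κ] {g : κ → ι → ℂ} (hg : IsOrthonormal g) {Ψ : ι → ℂ}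
    (hΨ : star Ψ ⬝ᵥ Ψ = 1) : ∑ k, ‖star Ψ ⬝ᵥ g k‖ ^ 2 ≤ 1 := by
  have h := dotProduct_star_self_nonneg (Ψ - ∑ k, (star (g k) ⬝ᵥ Ψ) • g k)
  rw [star_dotProduct_self_sub_sum hg, hΨ, ← Complex.ofReal_one, ← Complex.ofReal_sub,
    Complex.zero_le_real] at h
  linarith

lemma mem_span_of_sum_norm_sq_eq_one [DecidableEq κ] {g : κ → ι → ℂ} (hg : IsOrthonormal g)
    {Ψ : ι → ℂ} (hΨ : star Ψ ⬝ᵥ Ψ = 1) (h : ∑ k, ‖star Ψ ⬝ᵥ g k‖ ^ 2 = 1) :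
    Ψ ∈ Submodule.span ℂ (Set.range g) := by
  have hr : Ψ - ∑ k, (star (g k) ⬝ᵥ Ψ) • g k = 0 := by
    rw [← dotProduct_star_self_eq_zero, star_dotProduct_self_sub_sum hg, hΨ, h,
      Complex.ofReal_one, sub_self]
  rw [sub_eq_zero.mp hr]
  exact Submodule.sum_mem _ fun k _ => Submodule.smul_mem _ _ (Submodule.subset_span ⟨k, rfl⟩)

lemma norm_mul_add_mul_sq_le (a s p z : ℂ) :
    ‖a * p + s * z‖ ^ 2 ≤ (‖a‖ ^ 2 + ‖s‖ ^ 2) * (‖p‖ ^ 2 + ‖z‖ ^ 2) := by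
  have h := (norm_add_le (a * p) (s * z)).trans_eq (by rw [norm_mul, norm_mul])
  calc ‖a * p + s * z‖ ^ 2 ≤ (‖a‖ * ‖p‖ + ‖s‖ * ‖z‖) ^ 2 := by gcongr
    _ ≤ (‖a‖ ^ 2 + ‖s‖ ^ 2) * (‖p‖ ^ 2 + ‖z‖ ^ 2) := by
      nlinarith [sq_nonneg (‖a‖ * ‖z‖ - ‖s‖ * ‖p‖)]

lemma eq_zero_of_norm_sq_add_norm_sq_eq_one {x p q z a s t : ℂ} (hx : x ≠ 0)
    (hbessel : ‖x‖ ^ 2 + ‖p‖ ^ 2 + ‖q‖ ^ 2 + ‖z‖ ^ 2 ≤ 1) (has : ‖a‖ ^ 2 + ‖s‖ ^ 2 = 1)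
    (ht : ‖t‖ ^ 2 ≤ 1) (hq : a * x + s * q = 0)
    (heq : ‖x‖ ^ 2 + ‖t * (a * p + s * z)‖ ^ 2 = 1) : a = 0 := by
  have hcs : ‖t * (a * p + s * z)‖ ^ 2 ≤ ‖p‖ ^ 2 + ‖z‖ ^ 2 := by
    rw [norm_mul, mul_pow]
    have := norm_mul_add_mul_sq_le a s p z
    rw [has, one_mul] at this
    exact (mul_le_of_le_one_left (by positivity) ht).trans this
  have hq0 : q = 0 := by
    rw [← norm_eq_zero]
    nlinarith [norm_nonneg q]
  simpa [hq0, hx] using hq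

end Hermitian

/-- Lemma 3, equality case. -/
theorem stmt8 {ιA ιB : Type*} [Fintype ιA] [Fintype ιB]
    (Ψ : ιA × ιB → ℂ) (hΨ : star Ψ ⬝ᵥ Ψ = 1)
    (φA φA' : ιA → ℂ) (φB φB' : ιB → ℂ)
    (hφA : star φA ⬝ᵥ φA = 1) (hφA' : star φA' ⬝ᵥ φA' = 1)
    (hφB : star φB ⬝ᵥ φB = 1) (hφB' : star φB' ⬝ᵥ φB' = 1)
    (h1 : star Ψ ⬝ᵥ tens φA φB' = 0) (h2 : star Ψ ⬝ᵥ tens φA' φB = 0)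
    (hA : ¬ ∃ c : ℂ, ‖c‖ = 1 ∧ φA' = c • φA)
    (hB : ¬ ∃ c : ℂ, ‖c‖ = 1 ∧ φB' = c • φB)
    (hne : star Ψ ⬝ᵥ tens φA φB ≠ 0)
    (heq : ‖star Ψ ⬝ᵥ tens φA φB‖ ^ 2 + ‖star Ψ ⬝ᵥ tens φA' φB'‖ ^ 2 = 1) :
    star φA ⬝ᵥ φA' = 0 ∧ star φB ⬝ᵥ φB' = 0 ∧
      Ψ ∈ Submodule.span ℂ
        ({tens φA φB, tens φA φB', tens φA' φB, tens φA' φB'} : Set (ιA × ιB → ℂ)) := by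
  obtain ⟨χA, sA, hχA, hφAχA, hdecA, hnormA⟩ := exists_orthogonal_decomposition hφA hφA' hA
  obtain ⟨χB, sB, hχB, hφBχB, hdecB, hnormB⟩ := exists_orthogonal_decomposition hφB hφB' hB
  set a := star φA ⬝ᵥ φA'
  set b := star φB ⬝ᵥ φB'
  set x := star Ψ ⬝ᵥ tens φA φB
  set p := star Ψ ⬝ᵥ tens φA χB
  set q := star Ψ ⬝ᵥ tens χA φB
  set z := star Ψ ⬝ᵥ tens χA χB
  have hbessel : ‖x‖ ^ 2 + ‖p‖ ^ 2 + ‖q‖ ^ 2 + ‖z‖ ^ 2 ≤ 1 := by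
    have := sum_norm_sq_le_one
      ((isOrthonormal_pair hφA hχA hφAχA).tens (isOrthonormal_pair hφB hχB hφBχB)) hΨ
    simpa [Fintype.sum_prod_type, add_assoc] using this
  have hp : b * x + sB * p = 0 := by
    rw [← h1, hdecB, star_dotProduct_tens_add_smul_right]
  have hq : a * x + sA * q = 0 := by
    rw [← h2, hdecA, star_dotProduct_tens_add_smul_left]
  have hWA : star Ψ ⬝ᵥ tens φA' φB' = sA * (b * q + sB * z) := by
    rw [hdecA, star_dotProduct_tens_add_smul_left, h1, mul_zero, zero_add, hdecB,
      star_dotProduct_tens_add_smul_right]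
  have hWB : star Ψ ⬝ᵥ tens φA' φB' = sB * (a * p + sA * z) := by
    rw [hdecB, star_dotProduct_tens_add_smul_right, h2, mul_zero, zero_add, hdecA,
      star_dotProduct_tens_add_smul_left]
  have ha : a = 0 := eq_zero_of_norm_sq_add_norm_sq_eq_one hne hbessel hnormA
    (by nlinarith [norm_nonneg b]) hq (hWB ▸ heq)
  have hb : b = 0 := eq_zero_of_norm_sq_add_norm_sq_eq_one hne (by linarith) hnormB
    (by nlinarith [norm_nonneg a]) hp (hWA ▸ heq)
  refine ⟨ha, hb, Submodule.span_mono ?_ (mem_span_of_sum_norm_sq_eq_one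
    ((isOrthonormal_pair hφA hφA' ha).tens (isOrthonormal_pair hφB hφB' hb)) hΨ ?_)⟩
  · rintro _ ⟨⟨i, j⟩, rfl⟩
    fin_cases i <;> fin_cases j <;> simp
  · simpa [Fintype.sum_prod_type, h1, h2] using heq
end
end

section
/- Key scalar inequality from Lemma 3's proof: Let θ, γ ∈ (0, π) with sin θ, sin γ ≠ 0. Set a = 2cos²θ cos²γ, b = 2 sinθ cosθ sinγ cosγ, c = 1 + cos²γ/sin²γ + cos²θ/sin²θ, d = sin²θ sin²γ. Then for all x ∈ [0, 1/√c], a x² + b x √(1 − c x²) + d ≤ 1, with equality for some x > 0 only if cos θ = cos γ = 0. -/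
open Matrix BigOperators
open scoped Kronecker ComplexOrder

noncomputable section

variable {A0 A B B0 : Type*} [Fintype A0] [Fintype A] [Fintype B] [Fintype B0]
  [DecidableEq A0] [DecidableEq A] [DecidableEq B] [DecidableEq B0]

/-! Writing `m = cot θ`, `n = cot γ` and `y = √(1 - c x²)`, the constraint becomes
`(1 + m² + n²) x² + y² = 1`, and after dividing by `sin² θ sin² γ` the defect
`1 - (a x² + b x y + d)` is an explicit sum of squares in `x, y` whose `x²`-coefficient
vanishes only for `m = n = 0`. -/

theorem one_add_sq_mul_one_add_sq_sub_eq_sum_sq {m n x y : ℝ}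
    (hxy : (1 + n ^ 2 + m ^ 2) * x ^ 2 + y ^ 2 = 1) :
    (1 + m ^ 2) * (1 + n ^ 2) - (2 * m ^ 2 * n ^ 2 * x ^ 2 + 2 * m * n * x * y + 1) =
      (n * y - m * x) ^ 2 + m ^ 2 * (1 + n ^ 2) * y ^ 2 +
        (n ^ 2 + m ^ 4 + m ^ 2 * n ^ 2 + n ^ 4 + m ^ 4 * n ^ 2 + m ^ 2 * n ^ 4) * x ^ 2 := by
  linear_combination (-(m ^ 2 + n ^ 2 + m ^ 2 * n ^ 2)) * hxy

theorem quadratic_le_one_add_sq_mul_one_add_sq {m n x y : ℝ}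
    (hxy : (1 + n ^ 2 + m ^ 2) * x ^ 2 + y ^ 2 = 1) :
    2 * m ^ 2 * n ^ 2 * x ^ 2 + 2 * m * n * x * y + 1 ≤ (1 + m ^ 2) * (1 + n ^ 2) := by
  rw [← sub_nonneg, one_add_sq_mul_one_add_sq_sub_eq_sum_sq hxy]
  positivity

theorem quadratic_lt_one_add_sq_mul_one_add_sq {m n x y : ℝ}
    (hxy : (1 + n ^ 2 + m ^ 2) * x ^ 2 + y ^ 2 = 1)
    (hx : x ≠ 0) (hmn : m ≠ 0 ∨ n ≠ 0) :
    2 * m ^ 2 * n ^ 2 * x ^ 2 + 2 * m * n * x * y + 1 < (1 + m ^ 2) * (1 + n ^ 2) := by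
  rw [← sub_pos, one_add_sq_mul_one_add_sq_sub_eq_sum_sq hxy]
  have hcoeff : 0 < n ^ 2 + m ^ 4 + m ^ 2 * n ^ 2 + n ^ 4 + m ^ 4 * n ^ 2 + m ^ 2 * n ^ 4 := by
    rcases hmn with hm | hn <;> positivity
  positivity

theorem mul_sq_add_sqrt_one_sub_sq {c x : ℝ} (hc : 0 < c) (hx : 0 ≤ x) (hxc : x ≤ 1 / √c) :
    c * x ^ 2 + √(1 - c * x ^ 2) ^ 2 = 1 := by
  have hx' : x * √c ≤ 1 := (le_div_iff₀ (Real.sqrt_pos.2 hc)).1 hxc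
  have hcx : c * x ^ 2 ≤ 1 := by
    calc c * x ^ 2 = (x * √c) ^ 2 := by rw [mul_pow, Real.sq_sqrt hc.le, mul_comm]
      _ ≤ 1 := pow_le_one₀ (by positivity) hx'
  rw [Real.sq_sqrt (sub_nonneg.2 hcx)]
  ring

theorem stmt9_general (θ γ : ℝ)
    (hsθ : Real.sin θ ≠ 0) (hsγ : Real.sin γ ≠ 0)
    (a b c d : ℝ)
    (ha : a = 2 * Real.cos θ ^ 2 * Real.cos γ ^ 2)
    (hb : b = 2 * Real.sin θ * Real.cos θ * Real.sin γ * Real.cos γ)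
    (hc : c = 1 + Real.cos γ ^ 2 / Real.sin γ ^ 2 + Real.cos θ ^ 2 / Real.sin θ ^ 2)
    (hd : d = Real.sin θ ^ 2 * Real.sin γ ^ 2) :
    (∀ x : ℝ, 0 ≤ x → x ≤ 1 / Real.sqrt c →
      a * x ^ 2 + b * x * Real.sqrt (1 - c * x ^ 2) + d ≤ 1) ∧
    ((∃ x : ℝ, 0 < x ∧ x ≤ 1 / Real.sqrt c ∧
        a * x ^ 2 + b * x * Real.sqrt (1 - c * x ^ 2) + d = 1) →
      Real.cos θ = 0 ∧ Real.cos γ = 0) := by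
  set m := Real.cos θ / Real.sin θ with hm
  set n := Real.cos γ / Real.sin γ with hn
  have hscale : 0 < Real.sin θ ^ 2 * Real.sin γ ^ 2 := by positivity
  have hval (x y : ℝ) : a * x ^ 2 + b * x * y + d =
      Real.sin θ ^ 2 * Real.sin γ ^ 2 * (2 * m ^ 2 * n ^ 2 * x ^ 2 + 2 * m * n * x * y + 1) := by
    rw [ha, hb, hd, hm, hn]
    field_simp
  have hone : Real.sin θ ^ 2 * Real.sin γ ^ 2 * ((1 + m ^ 2) * (1 + n ^ 2)) = 1 := by
    rw [hm, hn]
    field_simp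
    rw [add_comm, Real.sin_sq_add_cos_sq, add_comm, Real.sin_sq_add_cos_sq, one_mul]
  rw [← div_pow, ← div_pow, ← hm, ← hn] at hc
  subst hc
  have hconstr {x : ℝ} (hx : 0 ≤ x) (hxc : x ≤ 1 / √(1 + n ^ 2 + m ^ 2)) :
      (1 + n ^ 2 + m ^ 2) * x ^ 2 + √(1 - (1 + n ^ 2 + m ^ 2) * x ^ 2) ^ 2 = 1 :=
    mul_sq_add_sqrt_one_sub_sq (by positivity) hx hxc
  refine ⟨fun x hx hxc => ?_, fun ⟨x, hx, hxc, heq⟩ => ?_⟩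
  · calc _ = _ := hval _ _
      _ ≤ _ := mul_le_mul_of_nonneg_left
          (quadratic_le_one_add_sq_mul_one_add_sq (hconstr hx hxc)) hscale.le
      _ = 1 := hone
  · by_contra hcos
    have hmn : m ≠ 0 ∨ n ≠ 0 := by
      simp only [hm, hn, ne_eq, div_eq_zero_iff, hsθ, hsγ, or_false]
      tauto
    have hlt := quadratic_lt_one_add_sq_mul_one_add_sq (hconstr hx.le hxc) hx.ne' hmn
    refine (mul_lt_mul_of_pos_left hlt hscale).ne ?_
    rw [← hval, heq, hone]

/-- the key scalar inequality in the proof of Lemma 3. -/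
theorem stmt9 (θ γ : ℝ) (hθ : θ ∈ Set.Ioo 0 Real.pi) (hγ : γ ∈ Set.Ioo 0 Real.pi)
    (hsθ : Real.sin θ ≠ 0) (hsγ : Real.sin γ ≠ 0)
    (a b c d : ℝ)
    (ha : a = 2 * Real.cos θ ^ 2 * Real.cos γ ^ 2)
    (hb : b = 2 * Real.sin θ * Real.cos θ * Real.sin γ * Real.cos γ)
    (hc : c = 1 + Real.cos γ ^ 2 / Real.sin γ ^ 2 + Real.cos θ ^ 2 / Real.sin θ ^ 2)
    (hd : d = Real.sin θ ^ 2 * Real.sin γ ^ 2) :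
    (∀ x : ℝ, 0 ≤ x → x ≤ 1 / Real.sqrt c →
      a * x ^ 2 + b * x * Real.sqrt (1 - c * x ^ 2) + d ≤ 1) ∧
    ((∃ x : ℝ, 0 < x ∧ x ≤ 1 / Real.sqrt c ∧
        a * x ^ 2 + b * x * Real.sqrt (1 - c * x ^ 2) + d = 1) →
      Real.cos θ = 0 ∧ Real.cos γ = 0) :=
  stmt9_general θ γ hsθ hsγ a b c d ha hb hc hd
end
end

section
/- Score bound with fixed Schmidt angles: Let |ψ_1⟩ = cos χ |00⟩ + sin χ |11⟩ with cos χ, sin χ > 0, and suppose M̃^{A0B0} = |Ψ̃⟩⟨Ψ̃| where |Ψ̃⟩ = cosα cosβ · u |00⟩ + sinα sinβ · v |11⟩ is parallel to |ψ_1⟩ for complex numbers u, v with |u|² + |v|² ≤ 1 and α, β ∈ [0, π/2]. Then ⟨ψ_1| M̃^{A0B0} |ψ_1⟩ ≤ (sin²α sin²β cos²α cos²β)/(sin²α sin²β cos²χ + cos²α cos²β sin²χ). -/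
open Matrix BigOperators
open scoped Kronecker ComplexOrder

noncomputable section

variable {A0 A B B0 : Type*} [Fintype A0] [Fintype A] [Fintype B] [Fintype B0]
  [DecidableEq A0] [DecidableEq A] [DecidableEq B] [DecidableEq B0]

lemma dot_aux (cc ss c : ℂ) :
    star (fun p : Fin 2 × Fin 2 => if p = (0, 0) then cc else if p = (1, 1) then ss else 0) ⬝ᵥ
      (c • fun p : Fin 2 × Fin 2 => if p = (0, 0) then cc else if p = (1, 1) then ss else 0)
      = c * (star cc * cc + star ss * ss) := by
  simp [dotProduct, Fintype.sum_prod_type, Fin.sum_univ_two]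
  ring


/-- score bound with fixed Schmidt angles. -/
theorem stmt10 (χ α β : ℝ)
    (hχc : 0 < Real.cos χ) (hχs : 0 < Real.sin χ)
    (hα : α ∈ Set.Icc 0 (Real.pi / 2)) (hβ : β ∈ Set.Icc 0 (Real.pi / 2))
    (u v : ℂ) (huv : ‖u‖ ^ 2 + ‖v‖ ^ 2 ≤ 1)
    (ψ1 Ψt : Fin 2 × Fin 2 → ℂ)
    (hψ1 : ψ1 = fun p => if p = (0, 0) then (Real.cos χ : ℂ)
      else if p = (1, 1) then (Real.sin χ : ℂ) else 0)
    (hΨt : Ψt = fun p => if p = (0, 0) then (Real.cos α : ℂ) * (Real.cos β : ℂ) * u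
      else if p = (1, 1) then (Real.sin α : ℂ) * (Real.sin β : ℂ) * v else 0)
    (hpar : ∃ c : ℂ, Ψt = c • ψ1) :
    ‖star ψ1 ⬝ᵥ Ψt‖ ^ 2 ≤
      (Real.sin α ^ 2 * Real.sin β ^ 2 * Real.cos α ^ 2 * Real.cos β ^ 2) /
        (Real.sin α ^ 2 * Real.sin β ^ 2 * Real.cos χ ^ 2 +
          Real.cos α ^ 2 * Real.cos β ^ 2 * Real.sin χ ^ 2) := by

  obtain ⟨c, hc⟩ := hpar
  have h00 : (Real.cos α : ℂ) * (Real.cos β : ℂ) * u = c * (Real.cos χ : ℂ) := by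
    have := congrFun (hΨt.symm.trans hc) (0, 0)
    simpa [hψ1] using this
  have h11 : (Real.sin α : ℂ) * (Real.sin β : ℂ) * v = c * (Real.sin χ : ℂ) := by
    have := congrFun (hΨt.symm.trans hc) (1, 1)
    simpa [hψ1] using this
  have hone : ((Real.cos χ : ℂ) ^ 2 + (Real.sin χ : ℂ) ^ 2) = 1 := by
    rw [← Complex.ofReal_pow, ← Complex.ofReal_pow, ← Complex.ofReal_add,
      Real.cos_sq_add_sin_sq, Complex.ofReal_one]
  have hdot : star ψ1 ⬝ᵥ Ψt = c := by
    rw [hc, hψ1, dot_aux]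
    simp only [Complex.star_def, Complex.conj_ofReal]
    rw [← sq, ← sq, hone, mul_one]
  rw [hdot]
  set P := Real.cos α * Real.cos β with hP
  set S := Real.sin α * Real.sin β with hS
  have hP0 : 0 ≤ P := mul_nonneg
    (Real.cos_nonneg_of_mem_Icc ⟨by linarith [hα.1, Real.pi_pos], hα.2⟩)
    (Real.cos_nonneg_of_mem_Icc ⟨by linarith [hβ.1, Real.pi_pos], hβ.2⟩)
  have hS0 : 0 ≤ S := mul_nonneg
    (Real.sin_nonneg_of_mem_Icc ⟨hα.1, by linarith [hα.2, Real.pi_pos]⟩)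
    (Real.sin_nonneg_of_mem_Icc ⟨hβ.1, by linarith [hβ.2, Real.pi_pos]⟩)
  have hPc : (P : ℂ) = (Real.cos α : ℂ) * (Real.cos β : ℂ) := by
    rw [hP, Complex.ofReal_mul]
  have hSc : (S : ℂ) = (Real.sin α : ℂ) * (Real.sin β : ℂ) := by
    rw [hS, Complex.ofReal_mul]
  have hnum : Real.sin α ^ 2 * Real.sin β ^ 2 * Real.cos α ^ 2 * Real.cos β ^ 2
      = S ^ 2 * P ^ 2 := by rw [hP, hS]; ring
  have hden : Real.sin α ^ 2 * Real.sin β ^ 2 * Real.cos χ ^ 2 +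
      Real.cos α ^ 2 * Real.cos β ^ 2 * Real.sin χ ^ 2
      = S ^ 2 * Real.cos χ ^ 2 + P ^ 2 * Real.sin χ ^ 2 := by rw [hP, hS]; ring
  rw [hnum, hden]
  by_cases hPz : P = 0
  · have hc0 : c = 0 := by
      have h2 : (Real.cos α : ℂ) * (Real.cos β : ℂ) = 0 := by
        rw [← hPc]; exact_mod_cast hPz
      rw [h2, zero_mul] at h00
      exact (mul_eq_zero.mp h00.symm).resolve_right (by exact_mod_cast hχc.ne')
    rw [hc0]
    simpa using div_nonneg (by positivity) (by positivity :
      (0:ℝ) ≤ S ^ 2 * Real.cos χ ^ 2 + P ^ 2 * Real.sin χ ^ 2)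
  by_cases hSz : S = 0
  · have hc0 : c = 0 := by
      have h2 : (Real.sin α : ℂ) * (Real.sin β : ℂ) = 0 := by
        rw [← hSc]; exact_mod_cast hSz
      rw [h2, zero_mul] at h11
      exact (mul_eq_zero.mp h11.symm).resolve_right (by exact_mod_cast hχs.ne')
    rw [hc0]
    simpa using div_nonneg (by positivity) (by positivity :
      (0:ℝ) ≤ S ^ 2 * Real.cos χ ^ 2 + P ^ 2 * Real.sin χ ^ 2)
  · have hPp : 0 < P := lt_of_le_of_ne hP0 (Ne.symm hPz)
    have hSp : 0 < S := lt_of_le_of_ne hS0 (Ne.symm hSz)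
    have hPcne : (P : ℂ) ≠ 0 := by exact_mod_cast hPp.ne'
    have hScne : (S : ℂ) ≠ 0 := by exact_mod_cast hSp.ne'
    have hu : ‖u‖ = ‖c‖ * Real.cos χ / P := by
      have h3 : u = c * (Real.cos χ : ℂ) / (P : ℂ) := by
        rw [eq_div_iff hPcne, hPc]
        linear_combination h00
      rw [h3, norm_div, norm_mul, Complex.norm_real, Complex.norm_real,
        Real.norm_eq_abs, Real.norm_eq_abs, abs_of_pos hχc, abs_of_pos hPp]
    have hv : ‖v‖ = ‖c‖ * Real.sin χ / S := by
      have h3 : v = c * (Real.sin χ : ℂ) / (S : ℂ) := by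
        rw [eq_div_iff hScne, hSc]
        linear_combination h11
      rw [h3, norm_div, norm_mul, Complex.norm_real, Complex.norm_real,
        Real.norm_eq_abs, Real.norm_eq_abs, abs_of_pos hχs, abs_of_pos hSp]
    rw [hu, hv] at huv
    have hdpos : 0 < S ^ 2 * Real.cos χ ^ 2 + P ^ 2 * Real.sin χ ^ 2 := by positivity
    rw [le_div_iff₀ hdpos]
    have h2 : ‖c‖ ^ 2 * Real.cos χ ^ 2 * S ^ 2 + ‖c‖ ^ 2 * Real.sin χ ^ 2 * P ^ 2
        ≤ P ^ 2 * S ^ 2 := by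
      have h4 := mul_le_mul_of_nonneg_left huv
        (le_of_lt (by positivity : (0:ℝ) < P ^ 2 * S ^ 2))
      calc ‖c‖ ^ 2 * Real.cos χ ^ 2 * S ^ 2 + ‖c‖ ^ 2 * Real.sin χ ^ 2 * P ^ 2
          = P ^ 2 * S ^ 2 * ((‖c‖ * Real.cos χ / P) ^ 2 + (‖c‖ * Real.sin χ / S) ^ 2) := by
            field_simp
        _ ≤ P ^ 2 * S ^ 2 * 1 := h4
        _ = P ^ 2 * S ^ 2 := by ring
    nlinarith [h2]
end
end

section
/- Converse/achievability: Let |ψ_1⟩ = cos χ |00⟩ + sin χ |11⟩ ∈ C² ⊗ C² and let ρ^{AB} = |ψ_1^T⟩⟨ψ_1^T| where |ψ_1^T⟩ = cos χ |00⟩ + sin χ |11⟩ (real coefficients so the transpose acts trivially), and take M^{A0A} = M^{BB0} = |Φ⁺⟩⟨Φ⁺| with |Φ⁺⟩ = (1/√2)(|00⟩+|11⟩). Then M̃ = Tr_{AB}[(I ⊗ ρ^{AB} ⊗ I)(M^{A0A} ⊗ M^{BB0})] = (1/4)|ψ_1⟩⟨ψ_1|; in particular ⟨ψ_1|M̃|ψ_1⟩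 = 1/4 and M̃ is supported on span{|ψ_1⟩}. -/
open Matrix BigOperators
open scoped Kronecker ComplexOrder

noncomputable section

variable {A0 A B B0 : Type*} [Fintype A0] [Fintype A] [Fintype B] [Fintype B0]
  [DecidableEq A0] [DecidableEq A] [DecidableEq B] [DecidableEq B0]

/-- The two-qubit maximally entangled vector `|Φ⁺⟩ = (|00⟩ + |11⟩)/√2`. -/
def phiPlus : Fin 2 × Fin 2 → ℂ := fun p => if p.1 = p.2 then (1 / Real.sqrt 2 : ℝ) else 0

lemma hs2 : ((Real.sqrt 2 : ℝ) : ℂ) * ((Real.sqrt 2 : ℝ) : ℂ) = 2 := by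
  rw [← Complex.ofReal_mul, Real.mul_self_sqrt (by norm_num)]; norm_num

set_option maxHeartbeats 2000000 in
lemma hs4 : (((Real.sqrt 2 : ℝ) : ℂ))⁻¹ ^ 4 = 1/4 := by
  have h : ((Real.sqrt 2 : ℝ) : ℂ) ^ 4 = 4 := by
    have : ((Real.sqrt 2:ℝ):ℂ) ^ 4 = (((Real.sqrt 2:ℝ):ℂ) * ((Real.sqrt 2:ℝ):ℂ)) * (((Real.sqrt 2:ℝ):ℂ) * ((Real.sqrt 2:ℝ):ℂ)) := by ring
    rw [this, hs2]; norm_num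
  rw [inv_pow, h]; norm_num

lemma effPhi (ρ : Matrix (Fin 2 × Fin 2) (Fin 2 × Fin 2) ℂ) (p q : Fin 2 × Fin 2) :
    effOp ρ (vecProj phiPlus) (vecProj phiPlus) p q
      = (1/4 : ℂ) * ρ (q.1, q.2) (p.1, p.2) := by
  obtain ⟨p1, p2⟩ := p
  obtain ⟨q1, q2⟩ := q
  simp only [effOp, ptraceMid, midEmbed, vecProj, phiPlus, Matrix.mul_apply,
    Fintype.sum_prod_type, Matrix.kroneckerMap_apply, Matrix.of_apply, apply_ite (star : ℂ → ℂ), star_zero,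
    ite_mul, mul_ite, mul_zero, zero_mul, mul_one, one_mul,
    Finset.sum_ite_eq, Finset.sum_ite_eq', Finset.mem_univ, if_true,
    Fin.sum_univ_two]
  fin_cases p1 <;> fin_cases p2 <;> fin_cases q1 <;> fin_cases q2 <;>
    simp <;> ring_nf <;> rw [hs4] <;> ring


lemma mulVec_vecProj {m : Type*} [Fintype m] (v x : m → ℂ) :
    (vecProj v).mulVec x = (star v ⬝ᵥ x) • v := by
  ext i
  simp only [vecProj, Matrix.mulVec, dotProduct, Matrix.of_apply, Pi.smul_apply,
    smul_eq_mul, Pi.star_apply]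
  rw [Finset.sum_mul]
  exact Finset.sum_congr rfl fun j _ => by ring

lemma trace_vecProj_mul {m : Type*} [Fintype m] [DecidableEq m]
    (v : m → ℂ) (X : Matrix m m ℂ) :
    (vecProj v * X).trace = star v ⬝ᵥ X.mulVec v := by
  simp only [Matrix.trace, Matrix.diag, Matrix.mul_apply, vecProj, Matrix.of_apply,
    dotProduct, Matrix.mulVec, Pi.star_apply]
  rw [Finset.sum_comm]
  refine Finset.sum_congr rfl fun j _ => ?_
  rw [Finset.mul_sum]
  exact Finset.sum_congr rfl fun i _ => by ring

/-- achievability: with Bell measurements and the (transposed) target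
state, the effective operator is exactly `(1/4)|ψ₁⟩⟨ψ₁|`. -/
theorem stmt14 (χ : ℝ) (hχ : χ ∈ Set.Ioo 0 (Real.pi / 2))
    (ψ1 : Fin 2 × Fin 2 → ℂ)
    (hψ1 : ψ1 = fun p => if p = (0, 0) then (Real.cos χ : ℂ)
      else if p = (1, 1) then (Real.sin χ : ℂ) else 0) :
    effOp (vecProj ψ1) (vecProj phiPlus) (vecProj phiPlus) = (1 / 4 : ℂ) • vecProj ψ1 ∧
    star ψ1 ⬝ᵥ (effOp (vecProj ψ1) (vecProj phiPlus) (vecProj phiPlus)).mulVec ψ1 = 1 / 4 ∧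
    ((effOp (vecProj ψ1) (vecProj phiPlus) (vecProj phiPlus)) *
        ((1 : Matrix (Fin 2 × Fin 2) (Fin 2 × Fin 2) ℂ) - vecProj ψ1)).trace = 0 := by
  have hreal : ∀ x, star (ψ1 x) = ψ1 x := by
    intro x; subst hψ1; dsimp only
    split_ifs <;> simp only [Complex.star_def, Complex.conj_ofReal, map_zero]
  have hnorm : star ψ1 ⬝ᵥ ψ1 = 1 := by
    subst hψ1
    simp only [dotProduct, Fintype.sum_prod_type, Fin.sum_univ_two, Pi.star_apply]
    norm_num
    rw [← Complex.ofReal_cos, ← Complex.ofReal_sin, Complex.conj_ofReal, Complex.conj_ofReal,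
      ← Complex.ofReal_mul, ← Complex.ofReal_mul, ← Complex.ofReal_add,
      show Real.cos χ * Real.cos χ + Real.sin χ * Real.sin χ = 1 by
        nlinarith [Real.cos_sq_add_sin_sq χ], Complex.ofReal_one]
  have hmain : effOp (vecProj ψ1) (vecProj phiPlus) (vecProj phiPlus)
      = (1 / 4 : ℂ) • vecProj ψ1 := by
    ext p q
    rw [effPhi]
    simp only [vecProj, Matrix.smul_apply, Matrix.of_apply, smul_eq_mul]
    rw [hreal, hreal]
    ring
  refine ⟨hmain, ?_, ?_⟩
  · rw [hmain, Matrix.smul_mulVec, mulVec_vecProj, hnorm, one_smul,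
      dotProduct_smul, hnorm]
    norm_num
  · rw [hmain, Matrix.smul_mul, Matrix.trace_smul, trace_vecProj_mul,
      Matrix.sub_mulVec, Matrix.one_mulVec, mulVec_vecProj, hnorm, one_smul,
      sub_self, dotProduct_zero, smul_zero]
end
end
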